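/- Let n ≥ 5 and let V be a set of words of common length L over an n-letter alphabet such that any concatenation uv of two distinct u, v ∈ V has local exponent at most n/(n-1). If v₁, v₂, v₃, v₄ ∈ V are pairwise distinct and v is a common factor of v₁v₂ and v₃v₄, then |v| ≤ 2L/(n-1). -/

import Mathlib

open List

/-- `p` is a period of the word `w`. -/
def HasPeriod {α : Type*} (w : List α) (p : ℕ) : Prop :=
  1 ≤ p ∧ ∀ i, i + p < w.length → w[i]? = w[i + p]?

/-- minimal period of a word -/
noncomputable def per {α : Type*} (w : List α) : ℕ := sInf {p | _root_.HasPeriod w p}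

/-- local exponent of `w` is at most `q`: every nonempty factor has exponent ≤ q. -/
noncomputable def lexpLE {α : Type*} (w : List α) (q : ℚ) : Prop :=
  ∀ v : List α, v <:+: w → v ≠ [] → (v.length : ℚ) / per v ≤ q

/-- `v` is a (finite) factor of the infinite word `ω`. -/
def FactorOfInf {α : Type*} (v : List α) (ω : ℕ → α) : Prop :=
  ∃ i : ℕ, v = List.ofFn (fun j : Fin v.length => ω (i + j))

/-!
Fix occurrences of `v` at positions `i ≤ j` in `v₁ ++ v₂` and `v₃ ++ v₄`, and cut `v` at the
block boundaries of both words. Each of the (at most three) pieces occurs twice in one of the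
concatenations `v₃ ++ v₁`, `v₁ ++ v₄`, `v₄ ++ v₂`, the two occurrences being `L - (j - i)` resp.
`j - i` apart. Two occurrences of `x` at distance `P` give a factor of period `P` and length
`P + |x|`, so local exponent at most `q` forces `|x| ≤ (q - 1) P`. The distances add up to at most
`2L`, and `q - 1 = 1 / (n - 1)` for `q = n / (n - 1)`.
-/

variable {α : Type*}

theorem List.hasPeriod_append_length {u x : List α} (h : x <+: u ++ x) :
    (u ++ x).HasPeriod u.length := by
  rw [List.HasPeriod, take_left]
  exact (prefix_append_right_inj u).2 h

theorem hasPeriod_of_list_hasPeriod {w : List α} {p : ℕ} (hp : 0 < p) (h : w.HasPeriod p) :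
    _root_.HasPeriod w p :=
  ⟨hp, fun i hi => List.hasPeriod_iff_getElem?.1 h i (by omega)⟩

theorem per_le {w : List α} {p : ℕ} (h : _root_.HasPeriod w p) : per w ≤ p :=
  Nat.sInf_le h

theorem per_pos {w : List α} {p : ℕ} (h : _root_.HasPeriod w p) : 0 < per w :=
  (Nat.sInf_mem (s := {p | _root_.HasPeriod w p}) ⟨p, h⟩).1

theorem List.exists_isPrefix_drop_of_isInfix {v w : List α} (h : v <:+: w) :
    ∃ i, v <+: w.drop i := by
  obtain ⟨s, t, rfl⟩ := h
  exact ⟨s.length, by simp⟩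

theorem List.isPrefix_drop_left_of_isPrefix_drop_append {x y z : List α} {r : ℕ}
    (h : x <+: (y ++ z).drop r) (hx : x.length ≤ y.length - r) : x <+: y.drop r := by
  rw [drop_append] at h
  exact prefix_of_prefix_length_le h (prefix_append _ _) (by simpa using hx)

theorem List.isPrefix_drop_right_of_isPrefix_drop_append {x y z : List α} {r : ℕ}
    (h : x <+: (y ++ z).drop r) (hr : y.length ≤ r) : x <+: z.drop (r - y.length) := by
  rwa [drop_append, drop_of_length_le hr, nil_append] at h

namespace lexpLE

variable {w : List α} {q : ℚ}

theorem length_le_mul {z : List α} {p : ℕ} (h : lexpLE w q) (hz : z <:+: w) (hne : z ≠ [])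
    (hp : _root_.HasPeriod z p) : (z.length : ℚ) ≤ q * p := by
  have hexp := h z hz hne
  have hq : 0 ≤ q := (by positivity : (0 : ℚ) ≤ z.length / per z).trans hexp
  have hper : (0 : ℚ) < per z := by exact_mod_cast per_pos hp
  calc (z.length : ℚ) ≤ q * per z := (div_le_iff₀ hper).1 hexp
    _ ≤ q * p := mul_le_mul_of_nonneg_left (by exact_mod_cast per_le hp) hq

theorem length_le_of_isPrefix_append {u x : List α} (h : lexpLE w q) (hu : u ≠ [])
    (hux : u ++ x <:+: w) (hx : x <+: u ++ x) : (x.length : ℚ) ≤ (q - 1) * u.length := by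
  have hper : _root_.HasPeriod (u ++ x) u.length :=
    hasPeriod_of_list_hasPeriod (length_pos_iff.2 hu) (hasPeriod_append_length hx)
  have := h.length_le_mul hux (by simp [hu]) hper
  simp only [length_append, Nat.cast_add] at this
  linarith

theorem length_le_of_isPrefix_drop {y z x : List α} {r s P : ℕ} (h : lexpLE (y ++ z) q)
    (hq : 1 ≤ q) (hy : x <+: y.drop r) (hz : x <+: z.drop s) (hP : r + P = y.length + s) :
    (x.length : ℚ) ≤ (q - 1) * P := by
  rcases eq_or_ne x [] with rfl | hx
  · simpa using mul_nonneg (sub_nonneg.2 hq) (Nat.cast_nonneg P)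
  have hx₀ : 0 < x.length := length_pos_iff.2 hx
  have hr : r < y.length := by have := hy.length_le; simp at this; omega
  have hs : s < z.length := by have := hz.length_le; simp at this; omega
  obtain ⟨t, ht⟩ := hz
  have hinf : (y.drop r ++ z.take s) ++ x <:+: y ++ z :=
    ⟨y.take r, t, calc
      _ = (y.take r ++ y.drop r) ++ (z.take s ++ (x ++ t)) := by simp only [append_assoc]
      _ = y ++ z := by rw [ht, take_append_drop, take_append_drop]⟩
  have hpre : x <+: (y.drop r ++ z.take s) ++ x :=
    hy.trans (by rw [append_assoc]; exact prefix_append _ _)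
  have := h.length_le_of_isPrefix_append (by simp; omega) hinf hpre
  rwa [show (y.drop r ++ z.take s).length = P by simp; omega] at this

end lexpLE

theorem length_le_of_isPrefix_drop_append {a b c d v : List α} {L i j : ℕ} {q : ℚ} (hq : 1 ≤ q)
    (ha : a.length = L) (hc : c.length = L) (hd : d.length = L)
    (hca : lexpLE (c ++ a) q) (hdb : lexpLE (d ++ b) q) (had : lexpLE (a ++ d) q)
    (hij : i ≤ j) (hvi : v <+: (a ++ b).drop i) (hvj : v <+: (c ++ d).drop j) :
    (v.length : ℚ) ≤ (q - 1) * (2 * L) := by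
  have hq₁ : 0 ≤ q - 1 := sub_nonneg.2 hq
  by_cases hji : j ≤ L + i
  · -- `L - j` and `L - i` are the block boundaries of `c ++ d` and `a ++ b`, read in `v`
    have h₁ : ((v.take (L - j)).length : ℚ) ≤ (q - 1) * (L - (j - i) : ℕ) :=
      hca.length_le_of_isPrefix_drop hq
        (isPrefix_drop_left_of_isPrefix_drop_append ((take_prefix _ _).trans hvj)
          (by simp [hc]))
        (isPrefix_drop_left_of_isPrefix_drop_append ((take_prefix _ _).trans hvi)
          (by simp [ha]; omega))
        (by omega)
    have h₂ : (((v.take (L - i)).drop (L - j)).length : ℚ) ≤ (q - 1) * (j - i : ℕ) :=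
      had.length_le_of_isPrefix_drop hq
        (isPrefix_drop_left_of_isPrefix_drop_append
          (by simpa using ((take_prefix _ _).trans hvi).drop (L - j)) (by simp [ha]; omega))
        (isPrefix_drop_right_of_isPrefix_drop_append
          (by simpa using ((take_prefix _ _).trans hvj).drop (L - j)) (by simp [hc]; omega))
        (by simp [ha, hc]; omega)
    have h₃ : ((v.drop (L - i)).length : ℚ) ≤ (q - 1) * (L - (j - i) : ℕ) :=
      hdb.length_le_of_isPrefix_drop hq
        (isPrefix_drop_right_of_isPrefix_drop_append
          (by simpa using hvj.drop (L - i)) (by simp [hc]; omega))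
        (isPrefix_drop_right_of_isPrefix_drop_append
          (by simpa using hvi.drop (L - i)) (by simp [ha]; omega))
        (by simp [ha, hc, hd]; omega)
    have hlen : v.length = (v.take (L - j)).length + ((v.take (L - i)).drop (L - j)).length
        + (v.drop (L - i)).length := by
      simp only [length_take, length_drop]; omega
    calc (v.length : ℚ) ≤ (q - 1) * ((L - (j - i) + (j - i) + (L - (j - i)) : ℕ) : ℚ) := by
          rw [hlen]; push_cast at h₁ h₂ h₃ ⊢; linarith
      _ ≤ (q - 1) * (2 * L) := by gcongr; exact_mod_cast (by omega)
  · rcases eq_or_ne v [] with rfl | hv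
    · simpa using mul_nonneg hq₁ (by positivity : (0 : ℚ) ≤ 2 * L)
    have hvlen : v.length ≤ L + L - j := by simpa [hc, hd] using hvj.length_le
    have hv₀ : 0 < v.length := length_pos_iff.2 hv
    calc (v.length : ℚ) ≤ (q - 1) * (j - i : ℕ) :=
          had.length_le_of_isPrefix_drop hq
            (isPrefix_drop_left_of_isPrefix_drop_append hvi (by simp [ha]; omega))
            (isPrefix_drop_right_of_isPrefix_drop_append hvj (by simp [hc]; omega))
            (by simp [ha, hc]; omega)
      _ ≤ (q - 1) * (2 * L) := by gcongr; exact_mod_cast (by omega)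

theorem stmt4_general (n L : ℕ) (hn : 5 ≤ n) (V : Set (List (Fin n)))
    (hlen : ∀ v ∈ V, v.length = L)
    (hpair : ∀ u ∈ V, ∀ v ∈ V, u ≠ v → lexpLE (u ++ v) ((n : ℚ) / (n - 1)))
    (v₁ v₂ v₃ v₄ : List (Fin n)) (h₁ : v₁ ∈ V) (h₂ : v₂ ∈ V) (h₃ : v₃ ∈ V) (h₄ : v₄ ∈ V)
    (h13 : v₁ ≠ v₃) (h14 : v₁ ≠ v₄)
    (h23 : v₂ ≠ v₃) (h24 : v₂ ≠ v₄)
    (v : List (Fin n)) (hf₁ : v <:+: v₁ ++ v₂) (hf₂ : v <:+: v₃ ++ v₄) :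
    (v.length : ℚ) ≤ 2 * L / (n - 1) := by
  have hn₁ : (0 : ℚ) < n - 1 := by
    have : (5 : ℚ) ≤ n := by exact_mod_cast hn
    linarith
  have hq : (1 : ℚ) ≤ n / (n - 1) := by rw [le_div_iff₀ hn₁]; linarith
  obtain ⟨i, hi⟩ := exists_isPrefix_drop_of_isInfix hf₁
  obtain ⟨j, hj⟩ := exists_isPrefix_drop_of_isInfix hf₂
  have hbound : (v.length : ℚ) ≤ ((n : ℚ) / (n - 1) - 1) * (2 * L) := by
    rcases le_total i j with hij | hji
    · exact length_le_of_isPrefix_drop_append hq (hlen v₁ h₁) (hlen v₃ h₃) (hlen v₄ h₄)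
        (hpair v₃ h₃ v₁ h₁ h13.symm) (hpair v₄ h₄ v₂ h₂ h24.symm) (hpair v₁ h₁ v₄ h₄ h14)
        hij hi hj
    · exact length_le_of_isPrefix_drop_append hq (hlen v₃ h₃) (hlen v₁ h₁) (hlen v₂ h₂)
        (hpair v₁ h₁ v₃ h₃ h13) (hpair v₂ h₂ v₄ h₄ h24) (hpair v₃ h₃ v₂ h₂ h23.symm)
        hji hj hi
  calc (v.length : ℚ) ≤ ((n : ℚ) / (n - 1) - 1) * (2 * L) := hbound
    _ = 2 * L / (n - 1) := by field_simp; ring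

theorem stmt4 (n L : ℕ) (hn : 5 ≤ n) (V : Set (List (Fin n)))
    (hlen : ∀ v ∈ V, v.length = L)
    (hpair : ∀ u ∈ V, ∀ v ∈ V, u ≠ v → lexpLE (u ++ v) ((n : ℚ) / (n - 1)))
    (v₁ v₂ v₃ v₄ : List (Fin n)) (h₁ : v₁ ∈ V) (h₂ : v₂ ∈ V) (h₃ : v₃ ∈ V) (h₄ : v₄ ∈ V)
    (h12 : v₁ ≠ v₂) (h13 : v₁ ≠ v₃) (h14 : v₁ ≠ v₄)
    (h23 : v₂ ≠ v₃) (h24 : v₂ ≠ v₄) (h34 : v₃ ≠ v₄)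
    (v : List (Fin n)) (hf₁ : v <:+: v₁ ++ v₂) (hf₂ : v <:+: v₃ ++ v₄) :
    (v.length : ℚ) ≤ 2 * L / (n - 1) :=
  stmt4_general n L hn V hlen hpair v₁ v₂ v₃ v₄ h₁ h₂ h₃ h₄ h13 h14 h23 h24 v hf₁ hf₂
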